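/- arXiv:2401.15373 — 2 statements merged into one kernel-verified Lean document; each statement's English description precedes it below -/
import Mathlib

section
/- Let (X,d,μ) be a Borel metric measure space in which every closed ball has positive finite measure, and fix r > 0. The following are equivalent: (i) μ(X) < ∞ and inf{μ(B(x,r)) : x ∈ X} > 0; (ii) μ(X) < ∞ and inf{μ(B(x,s)) : x ∈ X} > 0 for every s ≥ r; (iii) X is bounded and s-doubling for every s ≥ r. -/
/-! If `μ(X) < ∞` and the `r`-balls have measure at least `c > 0`, then `X` is bounded,
since an unbounded space contains infinitely many pairwise disjoint `r`-balls; and every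
`s`-ball with `s ≥ r` has measure at least `c`, so
`μ(B(x,2s)) ≤ μ(X) ≤ (μ(X)/c) μ(B(x,s))`. Conversely, if `X` is bounded and doubling at
all scales `≥ s`, then iterating the doubling inequality `k` times, with
`2ᵏ s ≥ diam X`, gives `μ(X) ≤ C μ(B(x,s))` for every `x`. -/

open MeasureTheory Metric Filter Set

/-- `X` is `s`-doubling: there is `γ ≥ 1` with `μ(B(x,2s)) ≤ γ μ(B(x,s))` for all `x`. -/
def DoublingAt {X : Type*} [PseudoMetricSpace X] [MeasurableSpace X]
    (μ : MeasureTheory.Measure X) (s : ℝ) : Prop :=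
  ∃ γ : ℝ, 1 ≤ γ ∧ ∀ x : X,
    μ (closedBall x (2 * s)) ≤ ENNReal.ofReal γ * μ (closedBall x s)

section

variable {X : Type*} [PseudoMetricSpace X]

theorem exists_seq_lt_dist_of_not_isBounded_univ (hX : ¬ Bornology.IsBounded (univ : Set X))
    (c : ℝ) : ∃ f : ℕ → X, ∀ ⦃m n⦄, m < n → c < dist (f m) (f n) := by
  obtain ⟨x₀⟩ : Nonempty X := by
    by_contra! h
    exact hX (by rw [univ_eq_empty_iff.2 h]; exact Bornology.isBounded_empty)
  have hfar : ∀ R : ℝ, ∃ y : X, R < dist y x₀ := by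
    by_contra! h
    obtain ⟨R, hR⟩ := h
    exact hX (isBounded_closedBall.subset fun y _ => hR y)
  choose g hg using hfar
  -- each point is chosen farther from `x₀` than the previous one by more than `|c|`
  let f : ℕ → X := fun n => Nat.rec x₀ (fun _ y => g (dist y x₀ + |c|)) n
  have hgap : ∀ ⦃m n⦄, m < n → dist (f m) x₀ + |c| < dist (f n) x₀ := by
    intro m n hmn
    induction n, hmn using Nat.le_induction with
    | base => exact hg _
    | succ n _ ih => linarith [hg (dist (f n) x₀ + |c|), abs_nonneg c]
  refine ⟨f, fun m n hmn => ?_⟩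
  linarith [hgap hmn, dist_triangle (f n) (f m) x₀, dist_comm (f m) (f n), le_abs_self c]

variable [MeasurableSpace X] {μ : Measure X}

theorem iInf_measure_closedBall_mono {r s : ℝ} (hrs : r ≤ s) :
    ⨅ x, μ (closedBall x r) ≤ ⨅ x, μ (closedBall x s) :=
  iInf_mono fun _ => measure_mono (closedBall_subset_closedBall hrs)

theorem measure_univ_lt_top_of_isBounded (hX : Bornology.IsBounded (univ : Set X))
    (hfin : ∀ (x : X) (s : ℝ), 0 < s → μ (closedBall x s) < ⊤) : μ univ < ⊤ := by
  rcases isEmpty_or_nonempty X with hempty | ⟨⟨x₀⟩⟩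
  · simp
  obtain ⟨R, hR⟩ := hX.subset_closedBall x₀
  calc μ univ ≤ μ (closedBall x₀ (max R 1)) :=
        measure_mono (hR.trans (closedBall_subset_closedBall (le_max_left R 1)))
    _ < ⊤ := hfin x₀ _ (lt_max_of_lt_right one_pos)

theorem measure_univ_eq_top_of_pairwise_disjoint {Ω : Type*} [MeasurableSpace Ω]
    {ν : Measure Ω} {s : ℕ → Set Ω} (hs : ∀ n, MeasurableSet (s n))
    (hd : Pairwise (Function.onFun Disjoint s)) {c : ENNReal} (hc : c ≠ 0)
    (hle : ∀ n, c ≤ ν (s n)) : ν univ = ⊤ :=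
  top_le_iff.1 <| calc
    ⊤ = ∑' _ : ℕ, c := (ENNReal.tsum_const_eq_top_of_ne_zero hc).symm
    _ ≤ ∑' n, ν (s n) := ENNReal.tsum_le_tsum hle
    _ = ν (⋃ n, s n) := (measure_iUnion hd hs).symm
    _ ≤ ν univ := measure_mono (subset_univ _)

theorem isBounded_univ_of_iInf_measure_closedBall_pos [OpensMeasurableSpace X] {r : ℝ}
    (hfin : μ univ < ⊤) (hinf : 0 < ⨅ x, μ (closedBall x r)) :
    Bornology.IsBounded (univ : Set X) := by
  by_contra hX
  obtain ⟨f, hf⟩ := exists_seq_lt_dist_of_not_isBounded_univ hX (r + r)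
  have hdisj : Pairwise (Function.onFun Disjoint fun n => closedBall (f n) r) :=
    (pairwise_disjoint_on _).2 fun m n hmn => closedBall_disjoint_closedBall (hf hmn)
  have htop := measure_univ_eq_top_of_pairwise_disjoint (fun _ => measurableSet_closedBall)
    hdisj hinf.ne' fun n => iInf_le _ (f n)
  exact hfin.ne htop

theorem doublingAt_of_iInf_measure_closedBall_pos {s : ℝ} (hfin : μ univ < ⊤)
    (hinf : 0 < ⨅ x, μ (closedBall x s)) : DoublingAt μ s := by
  set c := ⨅ x, μ (closedBall x s)
  have hquot : μ univ / c ≠ ⊤ := (ENNReal.div_lt_top hfin.ne hinf.ne').ne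
  refine ⟨max 1 (μ univ / c).toReal, le_max_left _ _, fun x => ?_⟩
  have hc : c ≠ ⊤ :=
    ne_top_of_le_ne_top hfin.ne ((iInf_le _ x).trans (measure_mono (subset_univ _)))
  calc μ (closedBall x (2 * s)) ≤ μ univ := measure_mono (subset_univ _)
    _ = μ univ / c * c := (ENNReal.div_mul_cancel hinf.ne' hc).symm
    _ ≤ ENNReal.ofReal (max 1 (μ univ / c).toReal) * μ (closedBall x s) := by
      gcongr
      · exact (ENNReal.le_ofReal_iff_toReal_le hquot (by positivity)).2 (le_max_right _ _)
      · exact iInf_le _ x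

theorem exists_measure_closedBall_two_pow_mul_le {s : ℝ} (hs : 0 ≤ s)
    (hdoub : ∀ t, s ≤ t → DoublingAt μ t) (k : ℕ) :
    ∃ C : ENNReal, C ≠ ⊤ ∧
      ∀ x, μ (closedBall x (2 ^ k * s)) ≤ C * μ (closedBall x s) := by
  induction k with
  | zero => exact ⟨1, ENNReal.one_ne_top, fun x => by simp⟩
  | succ k ih =>
    obtain ⟨C, hC, hle⟩ := ih
    obtain ⟨γ, -, hγ⟩ :=
      hdoub (2 ^ k * s) (le_mul_of_one_le_left hs (one_le_pow₀ one_le_two))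
    refine ⟨ENNReal.ofReal γ * C, ENNReal.mul_ne_top ENNReal.ofReal_ne_top hC, fun x => ?_⟩
    calc μ (closedBall x (2 ^ (k + 1) * s)) = μ (closedBall x (2 * (2 ^ k * s))) := by
          rw [pow_succ', mul_assoc]
      _ ≤ ENNReal.ofReal γ * μ (closedBall x (2 ^ k * s)) := hγ x
      _ ≤ ENNReal.ofReal γ * (C * μ (closedBall x s)) := by gcongr; exact hle x
      _ = ENNReal.ofReal γ * C * μ (closedBall x s) := (mul_assoc _ _ _).symm

theorem iInf_measure_closedBall_pos_of_doublingAt (hX : Bornology.IsBounded (univ : Set X))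
    {s : ℝ} (hs : 0 < s) (hdoub : ∀ t, s ≤ t → DoublingAt μ t)
    (hpos : ∀ x, 0 < μ (closedBall x s)) : 0 < ⨅ x, μ (closedBall x s) := by
  rcases isEmpty_or_nonempty X with hempty | ⟨⟨x₀⟩⟩
  · rw [iInf_of_empty]
    exact ENNReal.zero_lt_top
  obtain ⟨k, hk⟩ := pow_unbounded_of_one_lt (diam (univ : Set X) / s) one_lt_two
  obtain ⟨C, hC, hle⟩ := exists_measure_closedBall_two_pow_mul_le hs.le hdoub k
  have hcover : ∀ x : X, univ ⊆ closedBall x (2 ^ k * s) := fun x y _ =>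
    (dist_le_diam_of_mem hX trivial trivial).trans ((div_lt_iff₀ hs).1 hk).le
  calc 0 < μ univ / C :=
        ENNReal.div_pos ((hpos x₀).trans_le (measure_mono (subset_univ _))).ne' hC
    _ ≤ ⨅ x, μ (closedBall x s) := le_iInf fun x => ENNReal.div_le_of_le_mul <| by
        rw [mul_comm]
        exact (measure_mono (hcover x)).trans (hle x)

end

/-- For a Borel metric measure space whose closed balls have positive
finite measure and `r > 0`, the following are equivalent:
(i) `μ(X) < ∞` and `inf_x μ(B(x,r)) > 0`;
(ii) `μ(X) < ∞` and `inf_x μ(B(x,s)) > 0` for all `s ≥ r`;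
(iii) `X` is bounded and `s`-doubling for all `s ≥ r`. -/
theorem statement_5 {X : Type*} [MetricSpace X] [MeasurableSpace X] [BorelSpace X]
    (μ : Measure X)
    (hball : ∀ (x : X) (s : ℝ), 0 < s → 0 < μ (closedBall x s) ∧ μ (closedBall x s) < ⊤)
    (r : ℝ) (hr : 0 < r) :
    ((μ Set.univ < ⊤ ∧ 0 < ⨅ x : X, μ (closedBall x r)) ↔
      (μ Set.univ < ⊤ ∧ ∀ s : ℝ, r ≤ s → 0 < ⨅ x : X, μ (closedBall x s))) ∧
    ((μ Set.univ < ⊤ ∧ ∀ s : ℝ, r ≤ s → 0 < ⨅ x : X, μ (closedBall x s)) ↔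
      (Bornology.IsBounded (Set.univ : Set X) ∧ ∀ s : ℝ, r ≤ s → DoublingAt μ s)) := by
  refine ⟨⟨fun ⟨hfin, hinf⟩ => ?_, fun ⟨hfin, hinf⟩ => ⟨hfin, hinf r le_rfl⟩⟩,
    ⟨fun ⟨hfin, hinf⟩ => ?_, fun ⟨hX, hdoub⟩ => ?_⟩⟩
  · exact ⟨hfin, fun s hs => hinf.trans_le (iInf_measure_closedBall_mono hs)⟩
  · exact ⟨isBounded_univ_of_iInf_measure_closedBall_pos hfin (hinf r le_rfl),
      fun s hs => doublingAt_of_iInf_measure_closedBall_pos hfin (hinf s hs)⟩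
  · refine ⟨measure_univ_lt_top_of_isBounded hX fun x s hs => (hball x s hs).2, fun s hs => ?_⟩
    have hs₀ : 0 < s := hr.trans_le hs
    exact iInf_measure_closedBall_pos_of_doublingAt hX hs₀ (fun t ht => hdoub t (hs.trans ht))
      fun x => (hball x s hs₀).1
end

section
/- Let (X,d,μ) be a Borel metric measure space in which every closed ball has positive finite measure, fix r > 0, and suppose X is s-doubling and has the Vitali covering property for every s ≥ r. Then there exists a constant c ≥ 2 such that for every measurable function f on X that is integrable on every measurable set of finite measure and for every t > 0, (A_r f)*(t) ≤ c f**(t), where g* denotes the decreasing rearrangement and f**(t) = (1/t) ∫_0^t f*(s) ds. -/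
open MeasureTheory Metric Filter Set

/-- The averaging operator `A_r f(x) = (1/μ(B(x,r))) ∫_{B(x,r)} f dμ`. -/
noncomputable def avgOp {X : Type*} [MeasurableSpace X] [PseudoMetricSpace X]
    (μ : Measure X) (r : ℝ) (f : X → ℝ) (x : X) : ℝ :=
  (μ (closedBall x r)).toReal⁻¹ * ∫ y in closedBall x r, f y ∂μ

/-- `X` has the Vitali covering property: for every `A ⊆ X` and every family `𝓑` of
closed balls (coded as center–radius pairs) centered in `A`, with positive radii that
are uniformly bounded, such that every `x ∈ A` is the center of balls of `𝓑` of
arbitrarily small radius, there is a countable pairwise disjoint subfamily `𝓑' ⊆ 𝓑`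
with `μ(A \ ⋃ 𝓑') = 0`. -/
def VitaliCoveringProperty (X : Type*) [PseudoMetricSpace X] [MeasurableSpace X]
    (μ : MeasureTheory.Measure X) : Prop :=
  ∀ (A : Set X) (ℬ : Set (X × ℝ)),
    (∀ b ∈ ℬ, b.1 ∈ A ∧ 0 < b.2) →
    (∃ R : ℝ, ∀ b ∈ ℬ, b.2 ≤ R) →
    (∀ x ∈ A, ∀ ε > 0, ∃ s : ℝ, 0 < s ∧ s ≤ ε ∧ (x, s) ∈ ℬ) →
    ∃ ℬ' ⊆ ℬ, ℬ'.Countable ∧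
      (ℬ'.Pairwise fun b b' => Disjoint (closedBall b.1 b.2) (closedBall b'.1 b'.2)) ∧
      μ (A \ ⋃ b ∈ ℬ', closedBall b.1 b.2) = 0

/-- The distribution function `μ_f(t) = μ({x : |f(x)| > t})` of a function `f`. -/
noncomputable def distribFn {X : Type*} [MeasurableSpace X]
    (μ : MeasureTheory.Measure X) (f : X → ℝ) (t : ℝ) : ENNReal :=
  μ {x : X | t < |f x|}

/-- The decreasing rearrangement `f*(t) = inf{s ≥ 0 : μ_f(s) ≤ t}` of `f`
(with values in `[0,∞]`). -/
noncomputable def rearr {X : Type*} [MeasurableSpace X]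
    (μ : MeasureTheory.Measure X) (f : X → ℝ) (t : ℝ) : ENNReal :=
  sInf {s : ENNReal | μ {x : X | s < ENNReal.ofReal |f x|} ≤ ENNReal.ofReal t}

/-- The maximal rearrangement `f**(t) = (1/t) ∫_0^t f*(s) ds`. -/
noncomputable def rearr2 {X : Type*} [MeasurableSpace X]
    (μ : MeasureTheory.Measure X) (f : X → ℝ) (t : ℝ) : ENNReal :=
  (ENNReal.ofReal t)⁻¹ * ∫⁻ s in Set.Ioc (0 : ℝ) t, rearr μ f s

/-- The Lorentz norm `‖f‖_{p,q}`, for `p, q ∈ [1,∞]`: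
`(∫_0^∞ t^{q/p−1} f*(t)^q dt)^{1/q}` if `q < ∞`, and `sup_{t>0} t^{1/p} f*(t)` if
`q = ∞` (with the conventions `q/∞ = 0` and `1/∞ = 0` on the exponents). -/
noncomputable def lorentzNorm {X : Type*} [MeasurableSpace X]
    (μ : MeasureTheory.Measure X) (f : X → ℝ) (p q : ENNReal) : ENNReal :=
  if q = ⊤ then ⨆ t ∈ Set.Ioi (0 : ℝ), ENNReal.ofReal (t ^ (1 / p.toReal)) * rearr μ f t
  else (∫⁻ t in Set.Ioi (0 : ℝ),
    ENNReal.ofReal (t ^ (q.toReal / p.toReal - 1)) * rearr μ f t ^ q.toReal) ^ (1 / q.toReal)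

/-- The Lorentz norm `‖f‖_{(p,q)}`, defined as `‖f‖_{p,q}` with `f**` replacing `f*`. -/
noncomputable def lorentzNorm' {X : Type*} [MeasurableSpace X]
    (μ : MeasureTheory.Measure X) (f : X → ℝ) (p q : ENNReal) : ENNReal :=
  if q = ⊤ then ⨆ t ∈ Set.Ioi (0 : ℝ), ENNReal.ofReal (t ^ (1 / p.toReal)) * rearr2 μ f t
  else (∫⁻ t in Set.Ioi (0 : ℝ),
    ENNReal.ofReal (t ^ (q.toReal / p.toReal - 1)) * rearr2 μ f t ^ q.toReal) ^ (1 / q.toReal)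

open scoped ENNReal

/-!
Put `α = f*(t)` and `g = |f| · 1_{|f| > α}`, so that `|f| ≤ g + α`. Since `μ{|f| > α} ≤ t`,
layer cake and Fubini give `∫ g ≤ ∫_0^t f* = t f**(t)`, and `α ≤ f**(t)` as `f*` decreases.
Averaging, `|A_r f| ≤ A_r g + α`. At the fixed radius `r`, `A_r` has weak type `(1,1)` with
constant the doubling constant `γ`: a maximal disjoint family of `r`-balls centred where
`A_r g > β` covers that set after doubling the radii. With `β = γ ∫ g / t` this yields
`(A_r f)*(t) ≤ β + α ≤ (γ + 1) f**(t)`.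
-/

lemma min_ofReal_le_volume_inter_Ioc (t : ℝ) (m : ℝ≥0∞) :
    min (ENNReal.ofReal t) m ≤ volume ({s : ℝ | ENNReal.ofReal s < m} ∩ Ioc 0 t) := by
  rcases eq_or_ne m ⊤ with rfl | hm
  · calc min (ENNReal.ofReal t) ⊤ = volume (Ioc 0 t) := by simp
      _ ≤ _ := measure_mono fun s hs => mem_inter ENNReal.ofReal_lt_top hs
  · calc min (ENNReal.ofReal t) m = volume (Ioo 0 (min t m.toReal)) := by
          simp [ENNReal.ofReal_toReal hm]
      _ ≤ _ := measure_mono fun s hs => mem_inter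
          ((ENNReal.ofReal_lt_iff_lt_toReal hs.1.le hm).mpr (hs.2.trans_le (min_le_right _ _)))
          (mem_Ioc.mpr ⟨hs.1, hs.2.le.trans (min_le_left _ _)⟩)

lemma volume_ofReal_lt_inter_Ioi_le (a : ℝ≥0∞) :
    volume ({u : ℝ | ENNReal.ofReal u < a} ∩ Ioi 0) ≤ a := by
  rcases eq_or_ne a ⊤ with rfl | ha
  · exact le_top
  · calc volume ({u : ℝ | ENNReal.ofReal u < a} ∩ Ioi 0) ≤ volume (Ioo 0 a.toReal) :=
          measure_mono fun u hu =>
            mem_Ioo.mpr ⟨hu.2, (ENNReal.ofReal_lt_iff_lt_toReal hu.2.le ha).mp hu.1⟩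
      _ = a := by simp [ENNReal.ofReal_toReal ha]

section Rearrangement

variable {X : Type*} [MeasurableSpace X] {μ : Measure X} {f : X → ℝ}

lemma distribFn_antitone : Antitone (distribFn μ f) := fun _ _ huv =>
  measure_mono fun _ hx => huv.trans_lt hx

lemma rearr_antitone : Antitone (rearr μ f) := fun _ _ hst =>
  sInf_le_sInf fun _ hv => hv.trans (ENNReal.ofReal_le_ofReal hst)

lemma measure_rearr_lt_le (t : ℝ) :
    μ {x | rearr μ f t < ENNReal.ofReal |f x|} ≤ ENNReal.ofReal t := by
  obtain ⟨u, hanti, hu, hmem⟩ := exists_seq_tendsto_sInf (α := ℝ≥0∞)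
    (S := {s | μ {x | s < ENNReal.ofReal |f x|} ≤ ENNReal.ofReal t})
    ⟨⊤, by simp⟩ (OrderBot.bddBelow _)
  have hcover : {x | rearr μ f t < ENNReal.ofReal |f x|} ⊆
      ⋃ n, {x | u n < ENNReal.ofReal |f x|} := fun x hx =>
    mem_iUnion.mpr ((hu.eventually (gt_mem_nhds hx)).exists)
  calc μ {x | rearr μ f t < ENNReal.ofReal |f x|}
      ≤ μ (⋃ n, {x | u n < ENNReal.ofReal |f x|}) := measure_mono hcover
    _ = ⨆ n, μ {x | u n < ENNReal.ofReal |f x|} :=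
        Monotone.measure_iUnion fun _ _ hmn _ hx => (hanti hmn).trans_lt hx
    _ ≤ ENNReal.ofReal t := iSup_le hmem

lemma lt_rearr_iff {t : ℝ} {v : ℝ≥0∞} :
    v < rearr μ f t ↔ ENNReal.ofReal t < μ {x | v < ENNReal.ofReal |f x|} := by
  rw [← not_le, ← not_le, not_iff_not]
  exact ⟨fun h => (measure_mono fun x hx => h.trans_lt hx).trans (measure_rearr_lt_le t),
    fun h => sInf_le h⟩

lemma ofReal_lt_rearr_iff {t u : ℝ} (hu : 0 ≤ u) :
    ENNReal.ofReal u < rearr μ f t ↔ ENNReal.ofReal t < distribFn μ f u := by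
  simp only [lt_rearr_iff, distribFn, ENNReal.ofReal_lt_ofReal_iff_of_nonneg hu]

lemma rearr_le_rearr2 {t : ℝ} (ht : 0 < t) : rearr μ f t ≤ rearr2 μ f t := by
  rw [rearr2, ← ENNReal.div_eq_inv_mul, ENNReal.le_div_iff_mul_le
    (Or.inl (ENNReal.ofReal_pos.mpr ht).ne') (Or.inl ENNReal.ofReal_ne_top)]
  calc rearr μ f t * ENNReal.ofReal t = ∫⁻ _ in Ioc (0 : ℝ) t, rearr μ f t := by
        rw [setLIntegral_const, Real.volume_Ioc, sub_zero]
    _ ≤ ∫⁻ s in Ioc (0 : ℝ) t, rearr μ f s :=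
        setLIntegral_mono rearr_antitone.measurable fun _ hs => rearr_antitone hs.2

/- Fubini on `D = {(s, u) : s < μ_f(u)}`: its `u`-sections lie in `(0, f*(s))`, while its
`s`-sections inside `(0, t]` have measure at least `min(t, μ_f(u))`. -/
lemma setLIntegral_le_lintegral_rearr (hf : AEMeasurable f μ) {E : Set X} {t : ℝ}
    (hE : μ E ≤ ENNReal.ofReal t) :
    ∫⁻ x in E, ENNReal.ofReal |f x| ∂μ ≤ ∫⁻ s in Ioc (0 : ℝ) t, rearr μ f s := by
  set D := {p : ℝ × ℝ | ENNReal.ofReal p.1 < distribFn μ f p.2}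
  have hD : MeasurableSet D := measurableSet_lt (ENNReal.measurable_ofReal.comp measurable_fst)
    (distribFn_antitone.measurable.comp measurable_snd)
  calc ∫⁻ x in E, ENNReal.ofReal |f x| ∂μ
      = ∫⁻ u in Ioi 0, μ.restrict E {x | u < |f x|} :=
        lintegral_eq_lintegral_meas_lt _ (ae_of_all _ fun x => abs_nonneg _) hf.abs.restrict
    _ ≤ ∫⁻ u in Ioi 0, volume.restrict (Ioc 0 t) ((fun s => (s, u)) ⁻¹' D) := by
        refine lintegral_mono fun u => ?_
        rw [Measure.restrict_apply (measurable_prodMk_right hD)]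
        refine (le_min ?_ (Measure.restrict_le_self _)).trans
          (min_ofReal_le_volume_inter_Ioc t _)
        exact (measure_mono (subset_univ _)).trans ((Measure.restrict_apply_univ E).trans_le hE)
    _ = ∫⁻ s in Ioc 0 t, volume.restrict (Ioi 0) (Prod.mk s ⁻¹' D) := by
        rw [← Measure.prod_apply_symm hD, Measure.prod_apply hD]
    _ ≤ ∫⁻ s in Ioc (0 : ℝ) t, rearr μ f s := by
        refine lintegral_mono fun s => ?_
        rw [Measure.restrict_apply (measurable_prodMk_left hD)]
        refine le_trans (measure_mono fun u hu => mem_inter ?_ hu.2)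
          (volume_ofReal_lt_inter_Ioi_le _)
        exact (ofReal_lt_rearr_iff (le_of_lt hu.2)).mpr hu.1

end Rearrangement

lemma setLAverage_le_setLAverage_add {X : Type*} [MeasurableSpace X] {μ : Measure X}
    {s : Set X} {F G : X → ℝ≥0∞} {a : ℝ≥0∞} (hFG : ∀ y, F y ≤ G y + a) :
    ⨍⁻ y in s, F y ∂μ ≤ ⨍⁻ y in s, G y ∂μ + a := by
  rw [setLAverage_eq, setLAverage_eq]
  calc (∫⁻ y in s, F y ∂μ) / μ s ≤ (∫⁻ y in s, G y + a ∂μ) / μ s := by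
        gcongr; exact hFG _
    _ = (∫⁻ y in s, G y ∂μ) / μ s + a * μ s / μ s := by
        rw [lintegral_add_right _ measurable_const, setLIntegral_const, ENNReal.add_div]
    _ ≤ (∫⁻ y in s, G y ∂μ) / μ s + a := by
        gcongr; exact ENNReal.div_le_of_le_mul le_rfl

section Averages

variable {X : Type*} [PseudoMetricSpace X] [MeasurableSpace X]

/- Junk values: where `f` is not integrable on the ball, or the ball has measure `0` or `∞`,
`avgOp` is `0`. -/
lemma ofReal_abs_avgOp_le (μ : Measure X) (r : ℝ) (f : X → ℝ) (x : X) :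
    ENNReal.ofReal |avgOp μ r f x| ≤ ⨍⁻ y in closedBall x r, ENNReal.ofReal |f y| ∂μ := by
  have hinv : ENNReal.ofReal (μ (closedBall x r)).toReal⁻¹ ≤ (μ (closedBall x r))⁻¹ := by
    rw [← ENNReal.toReal_inv]; exact ENNReal.ofReal_toReal_le
  have hint : ENNReal.ofReal |∫ y in closedBall x r, f y ∂μ|
      ≤ ∫⁻ y in closedBall x r, ENNReal.ofReal |f y| ∂μ := by
    simpa only [Real.enorm_eq_ofReal_abs] using enorm_integral_le_lintegral_enorm f
  rw [avgOp, abs_mul, abs_inv, ENNReal.abs_toReal, ENNReal.ofReal_mul (by positivity),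
    setLAverage_eq, ENNReal.div_eq_inv_mul]
  exact mul_le_mul' hinv hint

variable [OpensMeasurableSpace X] {μ : Measure X} {r : ℝ} {C : ℝ≥0∞}

lemma measure_lt_setLAverage_closedBall_le
    (hC : ∀ x, μ (closedBall x (2 * r)) ≤ C * μ (closedBall x r))
    {G : X → ℝ≥0∞} (hG : ∫⁻ x, G x ∂μ ≠ ⊤) {β : ℝ≥0∞} (hβ0 : β ≠ 0) (hβ : β ≠ ⊤) :
    μ {x | β < ⨍⁻ y in closedBall x r, G y ∂μ} ≤ C * (∫⁻ x, G x ∂μ) / β := by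
  set ν := μ.withDensity G
  have : IsFiniteMeasure ν := isFiniteMeasure_withDensity hG
  set E := {x | β < ⨍⁻ y in closedBall x r, G y ∂μ}
  have hνpos : ∀ x ∈ E, 0 < ν (closedBall x r) := by
    intro x hx
    rw [withDensity_apply _ measurableSet_closedBall, pos_iff_ne_zero]
    intro h
    simp [E, setLAverage_eq, h] at hx
  have hμν : ∀ x ∈ E, μ (closedBall x r) ≤ β⁻¹ * ν (closedBall x r) := by
    intro x hx
    rw [← ENNReal.div_eq_inv_mul, ENNReal.le_div_iff_mul_le (Or.inl hβ0) (Or.inl hβ),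
      withDensity_apply _ measurableSet_closedBall]
    exact ENNReal.mul_le_of_le_div' (hx.le.trans_eq (setLAverage_eq _ _ _))
  obtain ⟨P, hPE, hPdisj, hPcover⟩ := Vitali.exists_disjoint_subfamily_covering_enlargement
    (fun x => closedBall x r) E (fun _ => (1 : ℝ)) 2 one_lt_two (fun _ _ => zero_le_one) 1
    (fun _ _ => le_rfl) fun x hx => nonempty_of_measure_ne_zero (hνpos x hx).ne'
  have hPc : P.Countable := by
    have h := Measure.countable_meas_pos_of_disjoint_iUnion (μ := ν)
      (As := fun p : P => closedBall (p : X) r) (fun _ => measurableSet_closedBall)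
      fun p q hpq => hPdisj p.2 q.2 (Subtype.coe_ne_coe.mpr hpq)
    simp only [hνpos _ (hPE (Subtype.prop _)), ofPred_true] at h
    exact countable_coe_iff.mp (countable_univ_iff.mp h)
  have hEcover : E ⊆ ⋃ p ∈ P, closedBall p (2 * r) := by
    intro x hx
    obtain ⟨p, hp, ⟨z, hzx, hzp⟩, -⟩ := hPcover x hx
    refine mem_biUnion hp (mem_closedBall.mpr ?_)
    linarith [dist_triangle_left x p z, mem_closedBall.mp hzx, mem_closedBall.mp hzp]
  calc μ E ≤ ∑' p : P, μ (closedBall (p : X) (2 * r)) :=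
        (measure_mono hEcover).trans (measure_biUnion_le μ hPc _)
    _ ≤ ∑' p : P, C * (β⁻¹ * ν (closedBall (p : X) r)) :=
        ENNReal.tsum_le_tsum fun p => (hC p).trans (by gcongr; exact hμν p (hPE p.2))
    _ = C * (β⁻¹ * ν (⋃ p ∈ P, closedBall p r)) := by
        rw [ENNReal.tsum_mul_left, ENNReal.tsum_mul_left,
          measure_biUnion hPc hPdisj fun _ _ => measurableSet_closedBall]
    _ ≤ C * (β⁻¹ * ν univ) := by gcongr; exact subset_univ _
    _ = C * (∫⁻ x, G x ∂μ) / β := by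
        rw [withDensity_apply _ MeasurableSet.univ, Measure.restrict_univ, ENNReal.div_eq_inv_mul]
        ring

lemma rearr_le_div_add_of_le_setLAverage (hC0 : C ≠ 0) (hCtop : C ≠ ⊤)
    (hC : ∀ x, μ (closedBall x (2 * r)) ≤ C * μ (closedBall x r))
    {g : X → ℝ} {G : X → ℝ≥0∞} {a : ℝ≥0∞}
    (hg : ∀ x, ENNReal.ofReal |g x| ≤ ⨍⁻ y in closedBall x r, G y ∂μ + a) {t : ℝ} (ht : 0 < t) :
    rearr μ g t ≤ C * (∫⁻ x, G x ∂μ) / ENNReal.ofReal t + a := by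
  set J := ∫⁻ x, G x ∂μ
  set β := C * J / ENNReal.ofReal t
  refine sInf_le (?_ : μ {x | β + a < ENNReal.ofReal |g x|} ≤ ENNReal.ofReal t)
  have hsub : {x | β + a < ENNReal.ofReal |g x|} ⊆
      {x | β < ⨍⁻ y in closedBall x r, G y ∂μ} := fun x hx =>
    lt_of_add_lt_add_right (hx.trans_le (hg x))
  refine (measure_mono hsub).trans ?_
  rcases eq_or_ne J 0 with hJ0 | hJ0
  · have hGB : ∀ x, ∫⁻ y in closedBall x r, G y ∂μ = 0 := fun x =>
      le_antisymm ((setLIntegral_le_lintegral _ _).trans hJ0.le) zero_le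
    simp [β, hJ0, setLAverage_eq, hGB]
  rcases eq_or_ne J ⊤ with hJtop | hJtop
  · simp [β, hJtop, hC0, ENNReal.top_div_of_ne_top]
  have hCJ0 : C * J ≠ 0 := mul_ne_zero hC0 hJ0
  have hCJtop : C * J ≠ ⊤ := ENNReal.mul_ne_top hCtop hJtop
  calc _ ≤ C * J / β := measure_lt_setLAverage_closedBall_le hC hJtop
        (ENNReal.div_pos hCJ0 ENNReal.ofReal_ne_top).ne'
        (ENNReal.div_ne_top hCJtop (ENNReal.ofReal_pos.mpr ht).ne')
    _ = ENNReal.ofReal t := ENNReal.div_div_cancel hCJ0 hCJtop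

lemma rearr_avgOp_le (hC0 : C ≠ 0) (hCtop : C ≠ ⊤)
    (hC : ∀ x, μ (closedBall x (2 * r)) ≤ C * μ (closedBall x r))
    {f : X → ℝ} (hf : Measurable f) {t : ℝ} (ht : 0 < t) :
    rearr μ (avgOp μ r f) t ≤ (C + 1) * rearr2 μ f t := by
  set α := rearr μ f t
  set E := {x | α < ENNReal.ofReal |f x|}
  have hE : MeasurableSet E := measurableSet_lt measurable_const hf.abs.ennreal_ofReal
  set G := E.indicator fun x => ENNReal.ofReal |f x| with hG
  have hGint : (∫⁻ x, G x ∂μ) / ENNReal.ofReal t ≤ rearr2 μ f t := by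
    rw [rearr2, ← ENNReal.div_eq_inv_mul]
    gcongr
    exact (lintegral_indicator hE _).trans_le
      (setLIntegral_le_lintegral_rearr hf.aemeasurable (measure_rearr_lt_le t))
  have hfG : ∀ y, ENNReal.ofReal |f y| ≤ G y + α := by
    intro y
    by_cases hy : y ∈ E
    · rw [hG, indicator_of_mem hy]; exact le_self_add
    · rw [hG, indicator_of_notMem hy, zero_add]; exact not_lt.mp hy
  calc rearr μ (avgOp μ r f) t ≤ C * (∫⁻ x, G x ∂μ) / ENNReal.ofReal t + α :=
        rearr_le_div_add_of_le_setLAverage hC0 hCtop hC (fun x =>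
          (ofReal_abs_avgOp_le μ r f x).trans (setLAverage_le_setLAverage_add hfG)) ht
    _ ≤ C * rearr2 μ f t + rearr2 μ f t := by
        rw [mul_div_assoc]; gcongr; exact rearr_le_rearr2 ht
    _ = (C + 1) * rearr2 μ f t := by ring

end Averages

theorem statement_8_general {X : Type*} [MetricSpace X] [MeasurableSpace X] [BorelSpace X]
    (μ : Measure X)
    (r : ℝ)
    (hdbl : ∀ s : ℝ, r ≤ s → DoublingAt μ s) :
    ∃ c : ℝ, 2 ≤ c ∧ ∀ f : X → ℝ, Measurable f →
      (∀ A : Set X, MeasurableSet A → μ A < ⊤ → IntegrableOn f A μ) →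
      ∀ t : ℝ, 0 < t →
        rearr μ (avgOp μ r f) t ≤ ENNReal.ofReal c * rearr2 μ f t := by
  obtain ⟨γ, hγ1, hγ⟩ := hdbl r le_rfl
  refine ⟨γ + 1, by linarith, fun f hf _ t ht => ?_⟩
  rw [ENNReal.ofReal_add (by linarith) zero_le_one, ENNReal.ofReal_one]
  exact rearr_avgOp_le (ENNReal.ofReal_pos.mpr (by linarith)).ne' ENNReal.ofReal_ne_top hγ hf ht

/-- If `X` is `s`-doubling and has the Vitali covering property for all
`s ≥ r`, there is `c ≥ 2` such that for every measurable `f` integrable on every set of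
finite measure and every `t > 0`, `(A_r f)*(t) ≤ c f**(t)`. -/
theorem statement_8 {X : Type*} [MetricSpace X] [MeasurableSpace X] [BorelSpace X]
    (μ : Measure X)
    (hball : ∀ (x : X) (s : ℝ), 0 < s → 0 < μ (closedBall x s) ∧ μ (closedBall x s) < ⊤)
    (r : ℝ) (hr : 0 < r)
    (hdbl : ∀ s : ℝ, r ≤ s → DoublingAt μ s)
    (hvitali : VitaliCoveringProperty X μ) :
    ∃ c : ℝ, 2 ≤ c ∧ ∀ f : X → ℝ, Measurable f →
      (∀ A : Set X, MeasurableSet A → μ A < ⊤ → IntegrableOn f A μ) →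
      ∀ t : ℝ, 0 < t →
        rearr μ (avgOp μ r f) t ≤ ENNReal.ofReal c * rearr2 μ f t :=
  statement_8_general μ r hdbl
end
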